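/- With CAR operators as above and the norm bound ‖a(f)‖ = ‖f‖, if the anticommutators [a(e^{iht}f), a(g)]₊ and [a*(e^{iht}f), a(g)]₊ tend to 0 in norm for all test vectors f, g, then for any monomials A = a#(f₁)⋯a#(f₂ₘ) (even product) and B = a#(g₁)⋯a#(gₙ), the commutator [τ_t A, B] tends to 0 in norm as t → ∞, where τ_t a#(f) = a#(e^{iht}f). -/
import Mathlib

open ContinuousLinearMap Filter

/-- CAR operators `c s f` (`c false f = a(f)`, `c true f = a*(f)`) with
`‖a#(f)‖ = ‖f‖`, and a dynamics `τ_t a#(f) = a#(U t f)` with `U t` isometric.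
If all anticommutators `[a#(U t f), a#(g)]₊` tend to `0` in norm as `t → ∞`, then
for any even monomial `A = a#(f₁)⋯a#(f₂ₘ)` and any monomial `B = a#(g₁)⋯a#(gₙ)` the
commutator `[τ_t A, B]` tends to `0` in norm. -/
theorem stmt_6 {h₁ H : Type*}
    [NormedAddCommGroup h₁] [InnerProductSpace ℂ h₁]
    [NormedAddCommGroup H] [InnerProductSpace ℂ H] [CompleteSpace H]
    (c : Bool → h₁ → H →L[ℂ] H)
    (hadj : ∀ f, c true f = adjoint (c false f))
    (hnorm : ∀ (s : Bool) (f : h₁), ‖c s f‖ = ‖f‖)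
    (U : ℝ → h₁ → h₁)
    (hUiso : ∀ t f, ‖U t f‖ = ‖f‖)
    (hanti : ∀ (s s' : Bool) (f g : h₁),
      Tendsto (fun t => ‖c s (U t f) * c s' g + c s' g * c s (U t f)‖) atTop (nhds 0)) :
    ∀ (l m : List (Bool × h₁)), Even l.length →
      Tendsto (fun t =>
          ‖(l.map fun p => c p.1 (U t p.2)).prod * (m.map fun p => c p.1 p.2).prod
            - (m.map fun p => c p.1 p.2).prod * (l.map fun p => c p.1 (U t p.2)).prod‖)
        atTop (nhds 0) := by
  have prodbound : ∀ (t : ℝ) (l : List (Bool × h₁)),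
      ‖(l.map fun p => c p.1 (U t p.2)).prod‖ ≤ (l.map fun p => ‖p.2‖).prod := by
    intro t l
    induction l with
    | nil => simpa [ContinuousLinearMap.one_def] using ContinuousLinearMap.norm_id_le (𝕜 := ℂ) (E := H)
    | cons p l ih =>
      simp only [List.map_cons, List.prod_cons]
      calc ‖c p.1 (U t p.2) * (l.map fun p => c p.1 (U t p.2)).prod‖
          ≤ ‖c p.1 (U t p.2)‖ * ‖(l.map fun p => c p.1 (U t p.2)).prod‖ := norm_mul_le _ _
        _ ≤ ‖p.2‖ * (l.map fun p => ‖p.2‖).prod := by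
            rw [hnorm, hUiso]
            exact mul_le_mul_of_nonneg_left ih (norm_nonneg _)
  have key : ∀ (l : List (Bool × h₁)) (s : Bool) (g : h₁),
      Tendsto (fun t => ‖(l.map fun p => c p.1 (U t p.2)).prod * c s g
          - ((-1 : ℂ) ^ l.length) • (c s g * (l.map fun p => c p.1 (U t p.2)).prod)‖)
        atTop (nhds 0) := by
    intro l s g
    induction l with
    | nil => simp
    | cons p l ih =>
      have hid : ∀ t : ℝ,
          (((p :: l).map fun p => c p.1 (U t p.2)).prod * c s g
            - ((-1 : ℂ) ^ (p :: l).length) • (c s g * ((p :: l).map fun p => c p.1 (U t p.2)).prod))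
          = c p.1 (U t p.2) * ((l.map fun p => c p.1 (U t p.2)).prod * c s g
              - ((-1 : ℂ) ^ l.length) • (c s g * (l.map fun p => c p.1 (U t p.2)).prod))
            + ((-1 : ℂ) ^ l.length) •
              ((c p.1 (U t p.2) * c s g + c s g * c p.1 (U t p.2))
                * (l.map fun p => c p.1 (U t p.2)).prod) := by
        intro t
        simp only [List.map_cons, List.prod_cons, List.length_cons, pow_succ]
        simp only [mul_sub, mul_smul_comm, smul_mul_assoc, add_mul, smul_add, mul_assoc,
          mul_neg, neg_smul, mul_one, sub_neg_eq_add]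
        abel
      have hb : ∀ t : ℝ,
          ‖(((p :: l).map fun p => c p.1 (U t p.2)).prod * c s g
            - ((-1 : ℂ) ^ (p :: l).length) • (c s g * ((p :: l).map fun p => c p.1 (U t p.2)).prod))‖
          ≤ ‖p.2‖ * ‖(l.map fun p => c p.1 (U t p.2)).prod * c s g
              - ((-1 : ℂ) ^ l.length) • (c s g * (l.map fun p => c p.1 (U t p.2)).prod)‖
            + ‖c p.1 (U t p.2) * c s g + c s g * c p.1 (U t p.2)‖ * (l.map fun p => ‖p.2‖).prod := by
        intro t
        rw [hid t]
        refine (norm_add_le _ _).trans (add_le_add ?_ ?_)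
        · refine (norm_mul_le _ _).trans ?_
          rw [hnorm, hUiso]
        · rw [norm_smul]
          simp only [norm_pow, norm_neg, norm_one, one_pow, one_mul]
          refine (norm_mul_le _ _).trans ?_
          exact mul_le_mul_of_nonneg_left (prodbound t l) (norm_nonneg _)
      refine squeeze_zero (fun t => norm_nonneg _) hb ?_
      have h1 : Tendsto (fun t => ‖p.2‖ * ‖(l.map fun p => c p.1 (U t p.2)).prod * c s g
          - ((-1 : ℂ) ^ l.length) • (c s g * (l.map fun p => c p.1 (U t p.2)).prod)‖)
          atTop (nhds 0) := by
        simpa using ih.const_mul ‖p.2‖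
      have h2 : Tendsto (fun t => ‖c p.1 (U t p.2) * c s g + c s g * c p.1 (U t p.2)‖
          * (l.map fun p => ‖p.2‖).prod) atTop (nhds 0) := by
        simpa using (hanti p.1 s p.2 g).mul_const ((l.map fun p => ‖p.2‖).prod)
      simpa using h1.add h2
  intro l m hl
  have keyc : ∀ (s : Bool) (g : h₁),
      Tendsto (fun t => ‖(l.map fun p => c p.1 (U t p.2)).prod * c s g
          - c s g * (l.map fun p => c p.1 (U t p.2)).prod‖) atTop (nhds 0) := by
    intro s g
    have := key l s g
    rw [show ((-1 : ℂ) ^ l.length) = 1 from hl.neg_one_pow] at this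
    simpa using this
  induction m with
  | nil => simp
  | cons q m ihm =>
    have hid : ∀ t : ℝ,
        ((l.map fun p => c p.1 (U t p.2)).prod * ((q :: m).map fun p => c p.1 p.2).prod
          - ((q :: m).map fun p => c p.1 p.2).prod * (l.map fun p => c p.1 (U t p.2)).prod)
        = ((l.map fun p => c p.1 (U t p.2)).prod * c q.1 q.2
            - c q.1 q.2 * (l.map fun p => c p.1 (U t p.2)).prod) * (m.map fun p => c p.1 p.2).prod
          + c q.1 q.2 * ((l.map fun p => c p.1 (U t p.2)).prod * (m.map fun p => c p.1 p.2).prod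
            - (m.map fun p => c p.1 p.2).prod * (l.map fun p => c p.1 (U t p.2)).prod) := by
      intro t
      simp only [List.map_cons, List.prod_cons]
      noncomm_ring
    have hb : ∀ t : ℝ,
        ‖(l.map fun p => c p.1 (U t p.2)).prod * ((q :: m).map fun p => c p.1 p.2).prod
          - ((q :: m).map fun p => c p.1 p.2).prod * (l.map fun p => c p.1 (U t p.2)).prod‖
        ≤ ‖(l.map fun p => c p.1 (U t p.2)).prod * c q.1 q.2
            - c q.1 q.2 * (l.map fun p => c p.1 (U t p.2)).prod‖ * ‖(m.map fun p => c p.1 p.2).prod‖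
          + ‖q.2‖ * ‖(l.map fun p => c p.1 (U t p.2)).prod * (m.map fun p => c p.1 p.2).prod
            - (m.map fun p => c p.1 p.2).prod * (l.map fun p => c p.1 (U t p.2)).prod‖ := by
      intro t
      rw [hid t]
      refine (norm_add_le _ _).trans (add_le_add (norm_mul_le _ _) ?_)
      refine (norm_mul_le _ _).trans ?_
      rw [hnorm]
    refine squeeze_zero (fun t => norm_nonneg _) hb ?_
    have h1 := (keyc q.1 q.2).mul_const ‖(m.map fun p => c p.1 p.2).prod‖
    have h2 := ihm.const_mul ‖q.2‖
    simpa using h1.add h2
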